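/- Let F be a field extension of 𝔽_p (for p prime) and n ≥ 1. Suppose c ∈ 𝔽_p⟨x₁,...,x_d⟩ is a multilinear polynomial such that [c, x_{d+1}] = 0 is a polynomial identity for M_n(𝔽_p) and c is not a polynomial identity for M_n(𝔽_p). Then c is a central polynomial for M_n(F): every evaluation of c on M_n(F) is a scalar matrix, and some evaluation is nonzero. -/

import Mathlib

/-!
Over `𝔽_p`, an evaluation of `c` commutes with every matrix, so it is scalar. A multilinear
polynomial evaluates through a multilinear map, so over `F` it suffices to evaluate it on tuples
of matrix units; these are the images of the matrix units over `𝔽_p`, on which `c` is scalar.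
Since `M_n(𝔽_p) → M_n(F)` is injective, a nonzero evaluation over `𝔽_p` stays nonzero
over `F`.
-/

/-- `f` is multilinear: a `K`-linear combination of permutation monomials. -/
def IsMultilinearPoly (K : Type*) [CommSemiring K] (d : ℕ)
    (f : FreeAlgebra K (Fin d)) : Prop :=
  f ∈ Submodule.span K
    {g | ∃ σ : Equiv.Perm (Fin d),
      g = (List.ofFn fun i => FreeAlgebra.ι K (σ i)).prod}

open Matrix

theorem FreeAlgebra.map_lift {R A B X : Type*} [CommSemiring R] [Semiring A] [Algebra R A]
    [Semiring B] [Algebra R B] (g : A →ₐ[R] B) (r : X → A) (f : FreeAlgebra R X) :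
    g (lift R r f) = lift R (g ∘ r) f := by
  have hcomp : g.comp (lift R r) = lift R (g ∘ r) := by ext; simp
  exact congr($hcomp f)

theorem MultilinearMap.map_mem_of_forall_basis {ι R : Type*} [CommRing R] [Finite ι]
    {M : ι → Type*} [∀ i, AddCommMonoid (M i)] [∀ i, Module R (M i)]
    {N : Type*} [AddCommGroup N] [Module R N] {κ : ι → Type*}
    (b : ∀ i, Module.Basis (κ i) R (M i)) (E : MultilinearMap R M N) {P : Submodule R N}
    (h : ∀ v : (i : ι) → κ i, E (fun i => b i (v i)) ∈ P) (m : ∀ i, M i) : E m ∈ P := by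
  have hquot : P.mkQ.compMultilinearMap E = 0 :=
    Module.Basis.ext_multilinear b fun v => by simpa using h v
  simpa using congr($hquot m)

theorem Matrix.exists_eq_smul_one_of_forall_commute {n R : Type*} [Fintype n] [DecidableEq n]
    [CommSemiring R] {M : Matrix n n R} (h : ∀ s, Commute M s) : ∃ a : R, M = a • 1 := by
  obtain ⟨a, ha⟩ := mem_range_scalar_iff_commute_single'.mpr fun i j => (h _).symm
  exact ⟨a, by rw [← ha, scalar_apply, smul_one_eq_diagonal]⟩

namespace IsMultilinearPoly

variable {K : Type*} {d : ℕ}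

theorem exists_multilinearMap_eq_lift [CommSemiring K] {f : FreeAlgebra K (Fin d)}
    {L A : Type*} [CommSemiring L] [Algebra K L] [Semiring A] [Algebra L A] [Algebra K A]
    [IsScalarTower K L A] (hf : IsMultilinearPoly K d f) :
    ∃ E : MultilinearMap L (fun _ : Fin d => A) A, ∀ r, E r = FreeAlgebra.lift K r f := by
  induction hf using Submodule.span_induction with
  | mem g hg =>
    obtain ⟨σ, rfl⟩ := hg
    refine ⟨(MultilinearMap.mkPiAlgebraFin L d A).domDomCongr σ, fun r => ?_⟩
    simp [MultilinearMap.mkPiAlgebraFin_apply, map_list_prod, List.map_ofFn, Function.comp_def]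
  | zero => exact ⟨0, fun r => by simp⟩
  | add x y _ _ hx hy =>
    obtain ⟨E₁, h₁⟩ := hx
    obtain ⟨E₂, h₂⟩ := hy
    exact ⟨E₁ + E₂, fun r => by simp [h₁, h₂]⟩
  | smul k x _ hx =>
    obtain ⟨E, h⟩ := hx
    exact ⟨algebraMap K L k • E, fun r => by simp [h, algebraMap_smul]⟩

theorem exists_lift_eq_smul_one_of_forall_single [CommRing K] {f : FreeAlgebra K (Fin d)}
    {L m : Type*} [CommRing L] [Algebra K L] [Fintype m] [DecidableEq m]
    (hf : IsMultilinearPoly K d f)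
    (h : ∀ v : Fin d → m × m,
      ∃ a : K, FreeAlgebra.lift K (fun i => single (v i).1 (v i).2 (1 : K)) f = a • 1)
    (r : Fin d → Matrix m m L) : ∃ a : L, FreeAlgebra.lift K r f = a • 1 := by
  obtain ⟨E, hE⟩ := hf.exists_multilinearMap_eq_lift (L := L) (A := Matrix m m L)
  suffices E r ∈ Submodule.span L {1} by
    obtain ⟨a, ha⟩ := Submodule.mem_span_singleton.mp this
    exact ⟨a, by rw [← hE, ← ha]⟩
  refine E.map_mem_of_forall_basis (fun _ => stdBasis L m m) (fun v => ?_) r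
  obtain ⟨a, ha⟩ := h v
  have hunits : (fun i => stdBasis L m m (v i))
      = (Algebra.ofId K L).mapMatrix ∘ fun i => single (v i).1 (v i).2 (1 : K) := by
    ext1 i
    simpa using stdBasis_eq_single L (v i).1 (v i).2
  rw [hE, hunits, ← FreeAlgebra.map_lift, ha, map_smul, map_one, ← algebraMap_smul L]
  exact Submodule.smul_mem _ _ (Submodule.mem_span_singleton_self 1)

end IsMultilinearPoly

theorem stmt13_general {p : ℕ} [Fact p.Prime] {F : Type*} [Field F]
    [Algebra (ZMod p) F] {n d : ℕ}
    (c : FreeAlgebra (ZMod p) (Fin d)) (hml : IsMultilinearPoly (ZMod p) d c)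
    (hcomm : ∀ (r : Fin d → Matrix (Fin n) (Fin n) (ZMod p))
      (s : Matrix (Fin n) (Fin n) (ZMod p)),
      FreeAlgebra.lift (ZMod p) r c * s - s * FreeAlgebra.lift (ZMod p) r c = 0)
    (hnotPI : ∃ r : Fin d → Matrix (Fin n) (Fin n) (ZMod p),
      FreeAlgebra.lift (ZMod p) r c ≠ 0) :
    (∀ r : Fin d → Matrix (Fin n) (Fin n) F,
      ∃ a : F, FreeAlgebra.lift (ZMod p) r c = a • (1 : Matrix (Fin n) (Fin n) F))
    ∧ ∃ r : Fin d → Matrix (Fin n) (Fin n) F,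
      FreeAlgebra.lift (ZMod p) r c ≠ 0 := by
  have hcentral (r : Fin d → Matrix (Fin n) (Fin n) (ZMod p)) :
      ∃ a : ZMod p, FreeAlgebra.lift (ZMod p) r c = a • 1 :=
    exists_eq_smul_one_of_forall_commute fun s => sub_eq_zero.mp (hcomm r s)
  refine ⟨hml.exists_lift_eq_smul_one_of_forall_single fun v => hcentral _, ?_⟩
  obtain ⟨r, hr⟩ := hnotPI
  let φ := (Algebra.ofId (ZMod p) F).mapMatrix (m := Fin n)
  have hφ : Function.Injective φ := map_injective (algebraMap (ZMod p) F).injective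
  exact ⟨φ ∘ r, by rwa [← FreeAlgebra.map_lift, map_ne_zero_iff φ hφ]⟩

theorem stmt13 {p : ℕ} [Fact p.Prime] {F : Type*} [Field F]
    [Algebra (ZMod p) F] {n d : ℕ} (hn : 1 ≤ n)
    (c : FreeAlgebra (ZMod p) (Fin d)) (hml : IsMultilinearPoly (ZMod p) d c)
    (hcomm : ∀ (r : Fin d → Matrix (Fin n) (Fin n) (ZMod p))
      (s : Matrix (Fin n) (Fin n) (ZMod p)),
      FreeAlgebra.lift (ZMod p) r c * s - s * FreeAlgebra.lift (ZMod p) r c = 0)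
    (hnotPI : ∃ r : Fin d → Matrix (Fin n) (Fin n) (ZMod p),
      FreeAlgebra.lift (ZMod p) r c ≠ 0) :
    (∀ r : Fin d → Matrix (Fin n) (Fin n) F,
      ∃ a : F, FreeAlgebra.lift (ZMod p) r c = a • (1 : Matrix (Fin n) (Fin n) F))
    ∧ ∃ r : Fin d → Matrix (Fin n) (Fin n) F,
      FreeAlgebra.lift (ZMod p) r c ≠ 0 :=
  stmt13_general c hml hcomm hnotPI
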